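/- Let D, E, F(Φⁿ) be symmetric positive semidefinite matrices with D + E positive definite, β > 0, and ‖Φⁿ‖ = 1. Let Φ̃^{n+1} = (I + k(D + E + βF(Φⁿ)))^{-1}Φⁿ. Then the frozen-coefficient energy Ẽ_{Φⁿ}(Φ) = Φᵀ(D+E)Φ + β Σ_j φ_j²(φⁿ_j)² satisfies Ẽ_{Φⁿ}(Φ̃^{n+1}/‖Φ̃^{n+1}‖) ≤ Ẽ_{Φⁿ}(Φⁿ). -/

import Mathlib

open Matrix

/-!
Write `A = D + E + β F(Φⁿ)`, so that the frozen-coefficient energy is the quadratic form of `A`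
and the claim compares Rayleigh quotients `R(y) ≤ R(x)` with `x = (I + kA) y`. In terms of the
moments `aᵢ = y ⬝ᵥ Aⁱ y` one has `x ⬝ᵥ x = a₀ + 2k a₁ + k² a₂` and
`x ⬝ᵥ A x = a₁ + 2k a₂ + k² a₃`, so it suffices that `a₁² ≤ a₀ a₂` and `a₁ a₂ ≤ a₀ a₃`. The first
is Cauchy–Schwarz; the second follows from it combined with Cauchy–Schwarz `a₂² ≤ a₁ a₃` for the
semi-inner product `(u, v) ↦ u ⬝ᵥ A v`.
-/

noncomputable section

lemma mul_add_le_add_mul_of_sq_le {a₀ a₁ a₂ a₃ k : ℝ} (ha₀ : 0 ≤ a₀) (ha₂ : 0 ≤ a₂)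
    (ha₃ : 0 ≤ a₃) (hk : 0 ≤ k) (h₀₂ : a₁ ^ 2 ≤ a₀ * a₂) (h₁₃ : a₂ ^ 2 ≤ a₁ * a₃) :
    a₁ * (a₀ + 2 * k * a₁ + k ^ 2 * a₂) ≤ (a₁ + 2 * k * a₂ + k ^ 2 * a₃) * a₀ := by
  have h₁₂ : a₁ * a₂ ≤ a₀ * a₃ := by
    have : (a₁ * a₂) ^ 2 ≤ (a₀ * a₃) * (a₁ * a₂) := by
      nlinarith [mul_le_mul h₀₂ h₁₃ (sq_nonneg _) (mul_nonneg ha₀ ha₂)]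
    nlinarith [mul_nonneg ha₀ ha₃]
  nlinarith [mul_le_mul_of_nonneg_left h₀₂ hk, mul_le_mul_of_nonneg_left h₁₂ (sq_nonneg k)]

namespace Matrix

variable {ι : Type*} [Fintype ι]

def rayleighQuotient (A : Matrix ι ι ℝ) (x : ι → ℝ) : ℝ := (x ⬝ᵥ A *ᵥ x) / (x ⬝ᵥ x)

lemma dotProduct_self_nonneg (x : ι → ℝ) : 0 ≤ x ⬝ᵥ x := by
  simpa only [star_trivial] using dotProduct_self_star_nonneg x

lemma inv_sqrt_smul_dotProduct_mulVec (A : Matrix ι ι ℝ) (x : ι → ℝ) :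
    ((√(x ⬝ᵥ x))⁻¹ • x) ⬝ᵥ A *ᵥ ((√(x ⬝ᵥ x))⁻¹ • x) = A.rayleighQuotient x := by
  rw [mulVec_smul, smul_dotProduct, dotProduct_smul, smul_smul, smul_eq_mul, ← mul_inv,
    Real.mul_self_sqrt (dotProduct_self_nonneg x), rayleighQuotient, inv_mul_eq_div]

lemma dotProduct_add_smul_diagonal_mulVec [DecidableEq ι] (M : Matrix ι ι ℝ) (β : ℝ)
    (d x : ι → ℝ) :
    x ⬝ᵥ (M + β • diagonal d) *ᵥ x = x ⬝ᵥ M *ᵥ x + β * ∑ j, x j ^ 2 * d j := by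
  rw [add_mulVec, dotProduct_add, smul_mulVec, dotProduct_smul, smul_eq_mul]
  congr 2
  simp only [dotProduct, mulVec_diagonal]
  exact Finset.sum_congr rfl fun j _ => by ring

namespace PosSemidef

variable {A : Matrix ι ι ℝ}

lemma dotProduct_mulVec_self_nonneg (hA : A.PosSemidef) (x : ι → ℝ) : 0 ≤ x ⬝ᵥ A *ᵥ x := by
  simpa only [star_trivial] using hA.dotProduct_mulVec_nonneg x

lemma dotProduct_mulVec_comm (hA : A.PosSemidef) (u v : ι → ℝ) :
    u ⬝ᵥ A *ᵥ v = v ⬝ᵥ A *ᵥ u := by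
  conv_lhs => rw [← (isHermitian_iff_isSymm.mp hA.isHermitian).eq]
  exact dotProduct_transpose_mulVec A u v

lemma dotProduct_mulVec_sq_le (hA : A.PosSemidef) (u v : ι → ℝ) :
    (u ⬝ᵥ A *ᵥ v) ^ 2 ≤ (u ⬝ᵥ A *ᵥ u) * (v ⬝ᵥ A *ᵥ v) := by
  classical
  have := LinearMap.BilinForm.apply_mul_apply_le_of_forall_zero_le (toLinearMap₂' ℝ A)
    (fun x => by simpa only [toLinearMap₂'_apply'] using hA.dotProduct_mulVec_self_nonneg x) u v
  simp only [toLinearMap₂'_apply'] at this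
  rwa [hA.dotProduct_mulVec_comm v u, ← sq] at this

lemma rayleighQuotient_le_of_eq_add_smul_mulVec (hA : A.PosSemidef) {k : ℝ} (hk : 0 ≤ k)
    {x y : ι → ℝ} (hx : x = y + k • A *ᵥ y) :
    A.rayleighQuotient y ≤ A.rayleighQuotient x := by
  classical
  have hxx : x ⬝ᵥ x = y ⬝ᵥ y + 2 * k * (y ⬝ᵥ A *ᵥ y) + k ^ 2 * (A *ᵥ y ⬝ᵥ A *ᵥ y) := by
    rw [hx]
    simp only [add_dotProduct, dotProduct_add, smul_dotProduct, dotProduct_smul, smul_eq_mul,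
      dotProduct_comm (A *ᵥ y) y]
    ring
  have hxAx : x ⬝ᵥ A *ᵥ x =
      y ⬝ᵥ A *ᵥ y + 2 * k * (A *ᵥ y ⬝ᵥ A *ᵥ y) + k ^ 2 * (A *ᵥ y ⬝ᵥ A *ᵥ (A *ᵥ y)) := by
    rw [hx]
    simp only [mulVec_add, mulVec_smul, add_dotProduct, dotProduct_add, smul_dotProduct,
      dotProduct_smul, smul_eq_mul, hA.dotProduct_mulVec_comm y (A *ᵥ y)]
    ring
  have h₀₂ := PosSemidef.one.dotProduct_mulVec_sq_le y (A *ᵥ y)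
  have h₁₃ := hA.dotProduct_mulVec_sq_le y (A *ᵥ y)
  simp only [one_mulVec, hA.dotProduct_mulVec_comm y (A *ᵥ y)] at h₀₂ h₁₃
  have key := mul_add_le_add_mul_of_sq_le (dotProduct_self_nonneg y)
    (dotProduct_self_nonneg (A *ᵥ y)) (hA.dotProduct_mulVec_self_nonneg (A *ᵥ y)) hk h₀₂ h₁₃
  rcases (dotProduct_self_nonneg y).eq_or_lt with hy | hy
  · rw [rayleighQuotient, ← hy, div_zero]
    exact div_nonneg (hA.dotProduct_mulVec_self_nonneg x) (dotProduct_self_nonneg x)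
  · have hx₀ : 0 < x ⬝ᵥ x := by
      rw [hxx]
      nlinarith [mul_nonneg hk (hA.dotProduct_mulVec_self_nonneg y),
        mul_nonneg (sq_nonneg k) (dotProduct_self_nonneg (A *ᵥ y))]
    rwa [rayleighQuotient, rayleighQuotient, div_le_div_iff₀ hy hx₀, hxx, hxAx]

lemma rayleighQuotient_inv_one_add_smul_mulVec_le [DecidableEq ι] (hA : A.PosSemidef) {k : ℝ}
    (hk : 0 ≤ k) (x : ι → ℝ) :
    A.rayleighQuotient ((1 + k • A)⁻¹ *ᵥ x) ≤ A.rayleighQuotient x := by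
  have hdet : IsUnit (1 + k • A).det :=
    (isUnit_iff_isUnit_det _).mp (PosDef.one.add_posSemidef (hA.smul hk)).isUnit
  refine hA.rayleighQuotient_le_of_eq_add_smul_mulVec hk ?_
  calc x = (1 + k • A) *ᵥ ((1 + k • A)⁻¹ *ᵥ x) := by
        rw [mulVec_mulVec, mul_nonsing_inv _ hdet, one_mulVec]
    _ = _ := by rw [add_mulVec, one_mulVec, smul_mulVec]

end PosSemidef

end Matrix

theorem stmt17_general {n : ℕ} (D E : Matrix (Fin n) (Fin n) ℝ)
    (hDE : (D + E).PosDef)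
    (β k : ℝ) (hβ : 0 < β) (hk : 0 < k)
    (Φn : Fin n → ℝ) (hΦn : Φn ⬝ᵥ Φn = 1)
    (Φt : Fin n → ℝ)
    (hΦt : Φt =
      ((1 : Matrix (Fin n) (Fin n) ℝ) +
        k • (D + E + β • Matrix.diagonal fun j => (Φn j) ^ 2))⁻¹ *ᵥ Φn) :
    ((Real.sqrt (Φt ⬝ᵥ Φt))⁻¹ • Φt) ⬝ᵥ ((D + E) *ᵥ ((Real.sqrt (Φt ⬝ᵥ Φt))⁻¹ • Φt)) +
        β * ∑ j, ((Real.sqrt (Φt ⬝ᵥ Φt))⁻¹ * Φt j) ^ 2 * (Φn j) ^ 2 ≤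
      Φn ⬝ᵥ ((D + E) *ᵥ Φn) + β * ∑ j, (Φn j) ^ 2 * (Φn j) ^ 2 := by
  set A := D + E + β • diagonal fun j => Φn j ^ 2
  have hA : A.PosSemidef :=
    hDE.posSemidef.add ((PosSemidef.diagonal fun j => sq_nonneg (Φn j)).smul hβ.le)
  calc _ = ((√(Φt ⬝ᵥ Φt))⁻¹ • Φt) ⬝ᵥ A *ᵥ ((√(Φt ⬝ᵥ Φt))⁻¹ • Φt) :=
        (dotProduct_add_smul_diagonal_mulVec _ _ _ _).symm
    _ = A.rayleighQuotient Φt := inv_sqrt_smul_dotProduct_mulVec A Φt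
    _ ≤ A.rayleighQuotient Φn := hΦt ▸ hA.rayleighQuotient_inv_one_add_smul_mulVec_le hk.le Φn
    _ = _ := by rw [rayleighQuotient, hΦn, div_one, dotProduct_add_smul_diagonal_mulVec]

theorem stmt17 {n : ℕ} (D E : Matrix (Fin n) (Fin n) ℝ)
    (hD : D.PosSemidef) (hE : E.PosSemidef) (hDE : (D + E).PosDef)
    (β k : ℝ) (hβ : 0 < β) (hk : 0 < k)
    (Φn : Fin n → ℝ) (hΦn : Φn ⬝ᵥ Φn = 1)
    (Φt : Fin n → ℝ)
    (hΦt : Φt =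
      ((1 : Matrix (Fin n) (Fin n) ℝ) +
        k • (D + E + β • Matrix.diagonal fun j => (Φn j) ^ 2))⁻¹ *ᵥ Φn) :
    ((Real.sqrt (Φt ⬝ᵥ Φt))⁻¹ • Φt) ⬝ᵥ ((D + E) *ᵥ ((Real.sqrt (Φt ⬝ᵥ Φt))⁻¹ • Φt)) +
        β * ∑ j, ((Real.sqrt (Φt ⬝ᵥ Φt))⁻¹ * Φt j) ^ 2 * (Φn j) ^ 2 ≤
      Φn ⬝ᵥ ((D + E) *ᵥ Φn) + β * ∑ j, (Φn j) ^ 2 * (Φn j) ^ 2 :=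
  stmt17_general D E hDE β k hβ hk Φn hΦn Φt hΦt
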